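/- arXiv:1710.09446 — 2 statements merged into one kernel-verified Lean document; each statement's English description precedes it below -/
import Mathlib

section
/- The density F(Φ) = √((3/2)C(Φ)² − A(Φ)B(Φ) + 3A'(Φ)C(Φ)) / A(Φ) transforms as a scalar density of weight one under the Palatini conformal transformation: F̄(Φ̄) = F(f(Φ̄)) · f'(Φ̄), where the barred coefficients Ā, B̄, C̄ are defined by the transformation rules Ā = e^{2γ₁}(A∘f), C̄ = e^{2γ₁}((C∘f)·f' − 2γ₂'·(A∘f)), B̄ = e^{2γ₁}(−12(A∘f)γ₁'γ₂' + 6(A∘f)(γ₂')² − 6(A'∘f)·f'·γ₂' + (B∘f)(f')² + 6(C∘f)·f'·(γ₁'−γ₂')). -/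
open Real in
/-- The Palatini density F = √((3/2)C² − A·B + 3A'·C)/A transforms as a scalar density
of weight one: F̄(x) = F(f(x))·f'(x). -/
theorem F_density_transformation
    (A B C γ₁ γ₂ f Abar Bbar Cbar : ℝ → ℝ)
    (hA : Differentiable ℝ A) (hγ₁ : Differentiable ℝ γ₁)
    (hγ₂ : Differentiable ℝ γ₂) (hf : Differentiable ℝ f)
    (hApos : ∀ x, 0 < A x) (hfpos : ∀ x, 0 < deriv f x)
    (hAbar : ∀ x, Abar x = exp (2 * γ₁ x) * A (f x))
    (hCbar : ∀ x, Cbar x =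
      exp (2 * γ₁ x) * (C (f x) * deriv f x - 2 * deriv γ₂ x * A (f x)))
    (hBbar : ∀ x, Bbar x = exp (2 * γ₁ x) *
      (-12 * A (f x) * deriv γ₁ x * deriv γ₂ x
        + 6 * A (f x) * (deriv γ₂ x) ^ 2
        - 6 * deriv A (f x) * deriv f x * deriv γ₂ x
        + B (f x) * (deriv f x) ^ 2
        + 6 * C (f x) * deriv f x * (deriv γ₁ x - deriv γ₂ x)))
    (hnn : ∀ x, 0 ≤ (3 / 2) * (C x) ^ 2 - A x * B x + 3 * deriv A x * C x)
    (hnnbar : ∀ x, 0 ≤ (3 / 2) * (Cbar x) ^ 2 - Abar x * Bbar x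
        + 3 * deriv Abar x * Cbar x) :
    ∀ x, Real.sqrt ((3 / 2) * (Cbar x) ^ 2 - Abar x * Bbar x
          + 3 * deriv Abar x * Cbar x) / Abar x
      = Real.sqrt ((3 / 2) * (C (f x)) ^ 2 - A (f x) * B (f x)
          + 3 * deriv A (f x) * C (f x)) / A (f x) * deriv f x := by
  intro x
  have hAbarfun : Abar = fun x => exp (2 * γ₁ x) * A (f x) := funext hAbar
  have hder : HasDerivAt Abar
      (exp (2 * γ₁ x) * (2 * deriv γ₁ x) * A (f x)
        + exp (2 * γ₁ x) * (deriv A (f x) * deriv f x)) x := by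
    rw [hAbarfun]
    exact (((hγ₁ x).hasDerivAt.const_mul 2).exp).mul
      (((hA (f x)).hasDerivAt.comp x (hf x).hasDerivAt))
  have hdAbar : deriv Abar x
      = exp (2 * γ₁ x) * (2 * deriv γ₁ x) * A (f x)
        + exp (2 * γ₁ x) * (deriv A (f x) * deriv f x) := hder.deriv
  set E := (3 / 2) * (C (f x)) ^ 2 - A (f x) * B (f x)
      + 3 * deriv A (f x) * C (f x) with hE
  have hkey : (3 / 2) * (Cbar x) ^ 2 - Abar x * Bbar x + 3 * deriv Abar x * Cbar x
      = (exp (2 * γ₁ x) * deriv f x) ^ 2 * E := by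
    rw [hCbar, hAbar, hBbar, hdAbar, hE]
    ring_nf
  have hEnn : 0 ≤ E := hnn (f x)
  have hsq : Real.sqrt ((exp (2 * γ₁ x) * deriv f x) ^ 2 * E)
      = (exp (2 * γ₁ x) * deriv f x) * Real.sqrt E := by
    rw [Real.sqrt_mul (sq_nonneg _), Real.sqrt_sq
      (mul_nonneg (Real.exp_pos _).le (hfpos x).le)]
  rw [hkey, hsq, hAbar]
  have h1 : A (f x) ≠ 0 := (hApos (f x)).ne'
  have h2 : exp (2 * γ₁ x) ≠ 0 := (Real.exp_pos _).ne'
  field_simp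
end

section
/- In the purely metric scalar-tensor theory, the quantity F_M(Φ)² = (2A(Φ)B(Φ) + 3A'(Φ)²)/(4A(Φ)²) transforms under the transformation rules Ā(x) = e^{2γ(x)}A(f(x)) and B̄(x) = e^{2γ(x)}((f'(x))² B(f(x)) − 6γ'(x)² A(f(x)) − 6γ'(x) A'(f(x)) f'(x)) as F̄_M(x)² = F_M(f(x))² · f'(x)², i.e. the algebraic identity 2ĀB̄ + 3(Ā')² = e^{4γ}(f')²·(2(A∘f)(B∘f) + 3(A'∘f)²) holds. -/
/-!
Writing `e = exp (2γ)`, the product rule gives `Ā' = e (2γ' (A ∘ f) + (A' ∘ f) f')`. Substituting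
this and the rule for `B̄` into `2ĀB̄ + 3(Ā')²`, the terms in `γ'` cancel: the `-12γ'²A²` and
`-12γ'AA'f'` coming from `2ĀB̄` are exactly offset by the `γ'` terms of `3(Ā')²`, leaving
`e² f'² (2AB + 3A'²)`.
-/

open Real

theorem hasDerivAt_exp_two_mul_mul_comp {A γ f : ℝ → ℝ} {x : ℝ}
    (hA : DifferentiableAt ℝ A (f x)) (hγ : DifferentiableAt ℝ γ x)
    (hf : DifferentiableAt ℝ f x) :
    HasDerivAt (fun y => exp (2 * γ y) * A (f y))
      (exp (2 * γ x) * (2 * deriv γ x * A (f x) + deriv A (f x) * deriv f x)) x := by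
  have hexp : HasDerivAt (fun y => exp (2 * γ y)) (exp (2 * γ x) * (2 * deriv γ x)) x :=
    (hγ.hasDerivAt.const_mul 2).exp
  have hcomp : HasDerivAt (fun y => A (f y)) (deriv A (f x) * deriv f x) x :=
    hA.hasDerivAt.comp x hf.hasDerivAt
  exact (hexp.mul hcomp).congr_deriv (by ring)

theorem conformal_weight_identity (e a b a' g' f' : ℝ) :
    2 * (e * a) * (e * (f' ^ 2 * b - 6 * g' ^ 2 * a - 6 * g' * a' * f'))
      + 3 * (e * (2 * g' * a + a' * f')) ^ 2
      = e ^ 2 * f' ^ 2 * (2 * a * b + 3 * a' ^ 2) := by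
  ring

open Real in
/-- Metric scalar-tensor identity: 2ĀB̄ + 3(Ā')² = e^{4γ}(f')²(2(A∘f)(B∘f) + 3(A'∘f)²). -/
theorem metric_F_transformation
    (A B γ f Abar Bbar : ℝ → ℝ)
    (hA : Differentiable ℝ A) (hγ : Differentiable ℝ γ) (hf : Differentiable ℝ f)
    (hAbar : ∀ x, Abar x = exp (2 * γ x) * A (f x))
    (hBbar : ∀ x, Bbar x = exp (2 * γ x) *
      ((deriv f x) ^ 2 * B (f x) - 6 * (deriv γ x) ^ 2 * A (f x)
        - 6 * deriv γ x * deriv A (f x) * deriv f x)) :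
    ∀ x, 2 * Abar x * Bbar x + 3 * (deriv Abar x) ^ 2
      = exp (4 * γ x) * (deriv f x) ^ 2 *
          (2 * A (f x) * B (f x) + 3 * (deriv A (f x)) ^ 2) := by
  intro x
  have hderiv : deriv Abar x
      = exp (2 * γ x) * (2 * deriv γ x * A (f x) + deriv A (f x) * deriv f x) := by
    rw [funext hAbar]
    exact (hasDerivAt_exp_two_mul_mul_comp (hA (f x)) (hγ x) (hf x)).deriv
  have hexp : exp (4 * γ x) = exp (2 * γ x) ^ 2 := by
    rw [← exp_nat_mul]
    ring_nf
  rw [hAbar, hBbar, hderiv, hexp]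
  exact conformal_weight_identity _ _ _ _ _ _
end
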